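/- arXiv:2603.15314 — 5 statements merged into one kernel-verified Lean document; each statement's English description precedes it below -/
import Mathlib

section
/- Let x, y, z be positive integers such that each of them divides at least one of the other two. Then, up to permutation, two of them are equal and the third divides them; more precisely, there is a relabeling of {x,y,z} as {x',y',z'} with y' = z' and x' ∣ y'. -/
lemma mperm (a b c : ℕ) : ({c, a, b} : Multiset ℕ) = ({a, b, c} : Multiset ℕ) := by
  show c ::ₘ a ::ₘ b ::ₘ 0 = a ::ₘ b ::ₘ c ::ₘ 0
  rw [Multiset.cons_swap c a, Multiset.cons_swap c b]

lemma mperm2 (a b c : ℕ) : ({b, a, c} : Multiset ℕ) = ({a, b, c} : Multiset ℕ) := by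
  show b ::ₘ a ::ₘ c ::ₘ 0 = a ::ₘ b ::ₘ c ::ₘ 0
  rw [Multiset.cons_swap b a]

lemma mpermr (a b c : ℕ) : ({b, c, a} : Multiset ℕ) = ({a, b, c} : Multiset ℕ) := by
  show b ::ₘ c ::ₘ a ::ₘ 0 = a ::ₘ b ::ₘ c ::ₘ 0
  rw [Multiset.cons_swap c a, Multiset.cons_swap b a]

/-- if each of three positive integers divides one of the other two,
then up to permutation two are equal and the third divides them. -/
theorem stmt2 (x y z : ℕ) (hx : 0 < x) (hy : 0 < y) (hz : 0 < z)
    (h1 : x ∣ y ∨ x ∣ z) (h2 : y ∣ x ∨ y ∣ z) (h3 : z ∣ x ∨ z ∣ y) :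
    ∃ x' y' z' : ℕ, ({x', y', z'} : Multiset ℕ) = ({x, y, z} : Multiset ℕ) ∧
      y' = z' ∧ x' ∣ y' := by
  rcases h1 with hxy | hxz <;> rcases h2 with hyx | hyz <;> rcases h3 with hzx | hzy
  · exact ⟨z, x, y, mperm x y z, Nat.dvd_antisymm hxy hyx, hzx⟩
  · exact ⟨z, x, y, mperm x y z, Nat.dvd_antisymm hxy hyx, hzy.trans hyx⟩
  · have := Nat.dvd_antisymm hxy (hyz.trans hzx)
    exact ⟨x, y, z, rfl, Nat.dvd_antisymm hyz (hzx.trans hxy), hxy⟩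
  · exact ⟨x, y, z, rfl, Nat.dvd_antisymm hyz hzy, hxy⟩
  · exact ⟨y, x, z, mperm2 x y z, Nat.dvd_antisymm hxz hzx, hyx⟩
  · have exy : x = y := Nat.dvd_antisymm (hxz.trans hzy) hyx
    exact ⟨z, x, y, mperm x y z, exy, hzy.trans hyx⟩
  · exact ⟨y, z, x, mpermr x y z, Nat.dvd_antisymm hzx hxz, hyz⟩
  · exact ⟨x, y, z, rfl, Nat.dvd_antisymm hyz hzy, hxz.trans hzy⟩
end

section
/- Let A be a dihedral Artin group with odd parameter m ≥ 3 presented as ⟨a₁,a₂ ∣ Π(a₁,a₂,m) = Π(a₂,a₁,m)⟩, and let B be a free group on two generators b₁, b₂. Then any group homomorphism φ : A → B with φ(a₁) = b₁ satisfies φ(a₂) = b₁. -/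
/-- The alternating product `a*b*a*b*⋯` of length `n`. -/
def altProd {G : Type*} [Monoid G] : G → G → ℕ → G
  | _, _, 0 => 1
  | a, b, n + 1 => a * altProd b a n

/-- Defining relation of the dihedral Artin group with parameter `m`;
the generators `a₁, a₂` are `FreeGroup.of false, FreeGroup.of true`. -/
def dihedralRels (m : ℕ) : Set (FreeGroup Bool) :=
  { altProd (FreeGroup.of false) (FreeGroup.of true) m *
    (altProd (FreeGroup.of true) (FreeGroup.of false) m)⁻¹ }

namespace Stmt7Aux

open FreeGroup List

variable {α : Type*} [DecidableEq α]

lemma red_tail {c : α × Bool} {t : List (α × Bool)}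
    (h : reduce (c :: t) = c :: t) : reduce t = t := by
  rw [reduce.cons] at h
  rcases hr : reduce t with _ | ⟨hd, tl⟩
  · rw [hr] at h
    simp at h
    simp [h]
  · rw [hr] at h
    dsimp only at h
    split_ifs at h with hc
    · have h1 : tl.length < (c :: t).length := by
        have := Red.length_le (reduce.red (L := t))
        rw [hr] at this
        simp at this ⊢
        omega
      rw [h] at h1; simp at h1
    · exact (congrArg (·.tail) h : hd :: tl = t)

lemma red_nocancel {c hd : α × Bool} {tl : List (α × Bool)}
    (h : reduce (c :: hd :: tl) = c :: hd :: tl) : ¬(c.1 = hd.1 ∧ c.2 = !hd.2) := by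
  have ht : reduce (hd :: tl) = hd :: tl := red_tail h
  rw [reduce.cons, ht] at h
  dsimp only at h
  split_ifs at h with hc
  · have := congrArg List.length h
    simp at this
    omega
  · exact hc

lemma cons_reduced {c hd : α × Bool} {tl : List (α × Bool)}
    (h : reduce (hd :: tl) = hd :: tl) (hc : ¬(c.1 = hd.1 ∧ c.2 = !hd.2)) :
    reduce (c :: hd :: tl) = c :: hd :: tl := by
  rw [reduce.cons, h]
  dsimp only
  rw [if_neg hc]

lemma reduce_append_single {y : α × Bool} :
    ∀ {w : List (α × Bool)}, reduce w = w →
    reduce (w ++ [y]) = w ++ [y] ∨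
      (reduce (w ++ [y]) = w.dropLast ∧ w.getLast?.map Prod.fst = some y.1) := by
  intro w
  induction w with
  | nil => intro _; left; simp [reduce]
  | cons c t ih =>
    intro hw
    have ht : reduce t = t := red_tail hw
    rcases ih ht with h1 | ⟨h1, h2⟩
    · match t, ht, h1 with
      | [], _, _ =>
        by_cases hc : c.1 = y.1 ∧ c.2 = !y.2
        · right
          constructor
          · simp [reduce.cons, reduce_singleton, if_pos hc]
          · simp [hc.1]
        · left
          exact cons_reduced (by simp [reduce]) hc
      | hd :: tl, ht, h1 =>
        left
        have hnc : ¬(c.1 = hd.1 ∧ c.2 = !hd.2) := red_nocancel hw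
        have : reduce (c :: (hd :: tl ++ [y])) = c :: (hd :: tl ++ [y]) := by
          rw [List.cons_append] at h1 ⊢
          exact cons_reduced h1 hnc
        simpa using this
    · match t, ht, h1, h2 with
      | hd :: tl, ht, h1, h2 =>
        right
        refine ⟨?_, by simpa using h2⟩
        have hnc : ¬(c.1 = hd.1 ∧ c.2 = !hd.2) := red_nocancel hw
        rcases hdl : (hd :: tl).dropLast with _ | ⟨d, ds⟩
        · have htl : tl = [] := by
            cases tl with
            | nil => rfl
            | cons a b => simp at hdl
          subst htl
          rw [List.cons_append, reduce.cons, h1, hdl]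
          simp
        · have htl : tl ≠ [] := by rintro rfl; simp at hdl
          have hd_eq : d = hd := by
            cases tl with
            | nil => simp at htl
            | cons a b => simp [List.dropLast_cons₂] at hdl; exact hdl.1.symm
          subst hd_eq
          rw [List.cons_append, reduce.cons, h1, hdl]
          dsimp only
          rw [if_neg hnc]
          rw [← hdl]
          cases tl with
          | nil => simp at htl
          | cons a b => simp [List.dropLast_cons₂]

lemma toWord_mul_of (x : FreeGroup α) (a : α) :
    (x * of a).toWord = reduce (x.toWord ++ [(a, true)]) := by
  conv_lhs => rw [← mk_toWord (x := x)]
  rw [show (of a : FreeGroup α) = mk [(a, true)] from rfl, mul_mk, toWord_mk]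

lemma head_mul_of {x : FreeGroup α} {a : α} {c : α × Bool}
    (hx : x.toWord.head? = some c) (hc : c.1 ≠ a) :
    (x * of a).toWord.head? = some c := by
  rw [toWord_mul_of]
  rcases reduce_append_single (y := (a, true)) (reduce_toWord x) with h | ⟨h, h2⟩
  · rw [h]
    rcases hw : x.toWord with _ | ⟨d, t⟩
    · rw [hw] at hx; simp at hx
    · rw [hw] at hx; simp at hx; simp [hx]
  · rw [h]
    rcases hw : x.toWord with _ | ⟨d, t⟩
    · rw [hw] at hx; simp at hx
    · rw [hw] at hx h2
      simp at hx
      cases t with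
      | nil => simp at h2; exact absurd (hx ▸ h2 : c.1 = a) hc
      | cons e s => simp [List.dropLast_cons₂, hx]

lemma head_mul_pow {x : FreeGroup α} {a : α} {c : α × Bool}
    (hx : x.toWord.head? = some c) (hc : c.1 ≠ a) (n : ℕ) :
    (x * of a ^ n).toWord.head? = some c := by
  induction n with
  | zero => simpa using hx
  | succ n ih =>
    rw [pow_succ, ← mul_assoc]
    exact head_mul_of ih hc

lemma toWord_of_mul (a : α) (x : FreeGroup α) :
    (of a * x).toWord = reduce ((a, true) :: x.toWord) := by
  conv_lhs => rw [← mk_toWord (x := x)]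
  rw [show (of a : FreeGroup α) = mk [(a, true)] from rfl, mul_mk, toWord_mk]
  rfl

lemma head_pow_mul {x : FreeGroup α} {a : α} {c : α × Bool}
    (hx : x.toWord.head? = some c) (hc : c.1 ≠ a) {n : ℕ} (hn : 0 < n) :
    (of a ^ n * x).toWord.head? = some (a, true) := by
  induction n with
  | zero => omega
  | succ n ih =>
    rcases Nat.eq_zero_or_pos n with rfl | hn'
    · rcases hw : x.toWord with _ | ⟨d, t⟩
      · rw [hw] at hx; simp at hx
      · rw [hw] at hx; simp at hx
        rw [pow_one, toWord_of_mul, hw,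
          cons_reduced (hw ▸ reduce_toWord x) (by simp [hx]; exact fun h => absurd h.symm hc)]
        simp
    · have ihh := ih hn'
      rcases hw : (of a ^ n * x).toWord with _ | ⟨d, t⟩
      · rw [hw] at ihh; simp at ihh
      · rw [hw] at ihh; simp at ihh
        rw [pow_succ', mul_assoc, toWord_of_mul, hw,
          cons_reduced (hw ▸ reduce_toWord _) (by simp [ihh])]
        simp

/-- The centralizer of a positive power of a generator in a free group consists of
powers of that generator. -/
lemma cent {a : α} {n : ℕ} (hn : 0 < n) :
    ∀ (N : ℕ) (x : FreeGroup α), x.toWord.length ≤ N →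
      Commute x (of a ^ n) → ∃ j : ℤ, x = of a ^ j := by
  intro N
  induction N with
  | zero =>
    intro x hx _
    exact ⟨0, by simpa using toWord_eq_nil_iff.mp (List.eq_nil_of_length_eq_zero (by omega))⟩
  | succ N ih =>
    intro x hx hcomm
    rcases hw : x.toWord with _ | ⟨⟨b, s⟩, t⟩
    · exact ⟨0, by simpa using toWord_eq_nil_iff.mp hw⟩
    by_cases hb : b = a
    · subst hb
      have hred : reduce ((b, s) :: t) = (b, s) :: t := hw ▸ reduce_toWord x
      have ht : reduce t = t := red_tail hred
      have hword : (mk t : FreeGroup α).toWord = t := by rw [toWord_mk, ht]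
      have hlen : (mk t : FreeGroup α).toWord.length ≤ N := by
        rw [hword]
        have := congrArg List.length hw
        simp at this
        omega
      have hgen : (mk [(b, s)] : FreeGroup α) = of b ^ (if s then (1 : ℤ) else -1) := by
        cases s
        · simp only [if_neg Bool.false_ne_true, zpow_neg, zpow_one]
          rw [show (of b : FreeGroup α) = mk [(b, true)] from rfl, inv_mk]
          rfl
        · simp [show (of b : FreeGroup α) = mk [(b, true)] from rfl]
      have hxx : x = mk [(b, s)] * mk t := by
        rw [mul_mk, List.singleton_append, ← hw, mk_toWord]
      have hcomm' : Commute (mk t : FreeGroup α) (of b ^ n) := by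
        have h1 : (mk t : FreeGroup α) = (mk [(b, s)])⁻¹ * x := by
          rw [hxx, inv_mul_cancel_left]
        rw [h1, hgen]
        exact (((Commute.refl (of b)).zpow_left _).pow_right n).inv_left.mul_left hcomm
      obtain ⟨j, hj⟩ := ih (mk t) hlen hcomm'
      exact ⟨(if s then 1 else -1) + j, by rw [hxx, hgen, hj, ← zpow_add]⟩
    · exfalso
      have hhead : x.toWord.head? = some (b, s) := by rw [hw]; rfl
      have h1 := head_mul_pow hhead hb n
      have h2 := head_pow_mul hhead hb hn
      rw [hcomm.eq, h2] at h1
      simp at h1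
      exact hb h1.1.symm

lemma semiconj_pow {G : Type*} [Monoid G] (a b : G) (k : ℕ) :
    (a * b) ^ k * a = a * (b * a) ^ k := by
  induction k with
  | zero => simp
  | succ k ih =>
    simp only [pow_succ', mul_assoc, ih]

lemma altProd_map {G H : Type*} [Monoid G] [Monoid H] (f : G →* H) :
    ∀ (n : ℕ) (a b : G), f (altProd a b n) = altProd (f a) (f b) n := by
  intro n
  induction n with
  | zero => intro a b; simp [altProd]
  | succ n ih => intro a b; simp [altProd, ih]

lemma altProd_odd {G : Type*} [Monoid G] (a b : G) (k : ℕ) :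
    altProd a b (2 * k + 1) = (a * b) ^ k * a := by
  induction k generalizing a b with
  | zero => simp [altProd]
  | succ k ih =>
    have : 2 * (k + 1) + 1 = (2 * k + 1) + 1 + 1 := by ring
    rw [this]
    show a * (b * altProd a b (2 * k + 1)) = _
    rw [ih, pow_succ', ← mul_assoc, ← mul_assoc]

end Stmt7Aux

open Stmt7Aux in
/-- any homomorphism from the dihedral Artin group with odd
parameter `m ≥ 3` to a free group of rank 2 sending `a₁ ↦ b₁` sends `a₂ ↦ b₁`. -/
theorem stmt7 (m : ℕ) (hodd : Odd m) (hm : 3 ≤ m)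
    (φ : PresentedGroup (dihedralRels m) →* FreeGroup Bool)
    (h1 : φ (PresentedGroup.of false) = FreeGroup.of false) :
    φ (PresentedGroup.of true) = FreeGroup.of false := by
  obtain ⟨k, hk⟩ := hodd
  set u : FreeGroup Bool := FreeGroup.of false with hu
  set v : FreeGroup Bool := φ (PresentedGroup.of true) with hv
  -- extract the relation in the free group
  have hrel0 : (PresentedGroup.mk (dihedralRels m))
      (altProd (FreeGroup.of false) (FreeGroup.of true) m *
        (altProd (FreeGroup.of true) (FreeGroup.of false) m)⁻¹) = 1 := by
    apply (QuotientGroup.eq_one_iff _).mpr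
    exact Subgroup.subset_normalClosure (Set.mem_singleton _)
  have hrel1 : (PresentedGroup.mk (dihedralRels m))
        (altProd (FreeGroup.of false) (FreeGroup.of true) m) =
      (PresentedGroup.mk (dihedralRels m))
        (altProd (FreeGroup.of true) (FreeGroup.of false) m) := by
    rw [map_mul, map_inv, mul_inv_eq_one] at hrel0
    exact hrel0
  have hrel2 : altProd u v m = altProd v u m := by
    have := congrArg φ hrel1
    rw [← MonoidHom.comp_apply, ← MonoidHom.comp_apply, altProd_map, altProd_map] at this
    simp only [MonoidHom.comp_apply] at this
    rw [show (PresentedGroup.mk (dihedralRels m)) (FreeGroup.of false) =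
        PresentedGroup.of (rels := dihedralRels m) false from rfl,
      show (PresentedGroup.mk (dihedralRels m)) (FreeGroup.of true) =
        PresentedGroup.of (rels := dihedralRels m) true from rfl, h1] at this
    exact this
  rw [hk, altProd_odd, altProd_odd] at hrel2
  set Δ : FreeGroup Bool := (u * v) ^ k * u with hΔ
  have hΔ2 : Δ = (v * u) ^ k * v := hrel2
  clear_value Δ
  have hΔu : Δ * u = v * Δ := by
    conv_lhs => rw [hΔ2]
    rw [semiconj_pow, mul_assoc, ← hΔ]
  have hΔv : Δ * v = u * Δ := by
    conv_lhs => rw [hΔ]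
    rw [semiconj_pow, mul_assoc, ← hΔ2]
  have hcommsq : Commute (Δ * Δ) u := by
    show Δ * Δ * u = u * (Δ * Δ)
    rw [mul_assoc, hΔu, ← mul_assoc, hΔv, mul_assoc]
  obtain ⟨j, hj⟩ := cent (a := false) (n := 1) one_pos ((Δ * Δ).toWord.length) (Δ * Δ)
    le_rfl (by simpa [hu] using hcommsq)
  set σ : FreeGroup Bool →* Multiplicative ℤ :=
    FreeGroup.lift (fun b => if b then (1 : Multiplicative ℤ) else Multiplicative.ofAdd 1)
    with hσ
  have hσu : σ u = Multiplicative.ofAdd 1 := by simp [hσ, hu]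
  have hσv : σ v = Multiplicative.ofAdd 1 := by
    have := congrArg σ hΔu
    rw [map_mul, map_mul, mul_comm (σ Δ) (σ u)] at this
    rw [← hσu]
    exact (mul_right_cancel this.symm)
  have hσΔ : σ Δ = Multiplicative.ofAdd (2 * (k : ℤ) + 1) := by
    rw [hΔ, map_mul, map_pow, map_mul, hσv, hσu, ← ofAdd_add, ← ofAdd_nsmul, ← ofAdd_add]
    congr 1
    simp [nsmul_eq_mul]
    ring
  have hjval : j = 2 * (2 * (k : ℤ) + 1) := by
    have h3 := congrArg σ hj
    rw [map_mul, hσΔ, map_zpow,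
      show σ (FreeGroup.of false) = Multiplicative.ofAdd 1 from by simp [hσ],
      ← ofAdd_add, ← ofAdd_zsmul] at h3
    have h4 := Multiplicative.ofAdd.injective h3
    simp [smul_eq_mul] at h4
    omega
  have hupow : (FreeGroup.of false : FreeGroup Bool) ^ (2 * m) = Δ * Δ := by
    have : ((2 * m : ℕ) : ℤ) = j := by rw [hjval, hk]; push_cast; ring
    rw [← zpow_natCast, this, ← hj]
  have hΔcomm : Commute Δ (FreeGroup.of false ^ (2 * m)) := by
    rw [hupow]
    exact (Commute.refl Δ).mul_right (Commute.refl Δ)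
  obtain ⟨i, hi⟩ := cent (a := false) (n := 2 * m) (by omega) (Δ.toWord.length) Δ
    le_rfl hΔcomm
  have hvu : v = u := by
    have h2 : v = Δ * u * Δ⁻¹ := eq_mul_inv_iff_mul_eq.mpr hΔu.symm
    rw [h2, hi, hu]
    group
  exact hvu
end

section
/- Let B be a dihedral Artin group with odd parameter m_B ≥ 3, with generators b₁, b₂, Garside element Δ_B = Π(b₁,b₂,m_B), central element δ_B = Δ_B², and u_B = b₁b₂. Let m_A be divisible by 4, let β ∈ B and t ∈ ℤ. Then the elements b₁ and b₁⁻¹ β Δ_B^t β⁻¹ satisfy the Artin relation of length m_A: Π(b₁, b₁⁻¹βΔ_B^tβ⁻¹, m_A) = Π(b₁⁻¹βΔ_B^tβ⁻¹, b₁, m_A). In particular, there is a well-defined homomorphism from the dihedral Artin group with parameter m_A to B sending a₁ ↦ b₁ and a₂ ↦ b₁⁻¹βΔ_B^tβ⁻¹. -/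
lemma altProd_map {G H : Type*} [Monoid G] [Monoid H] (f : G →* H) :
    ∀ (n : ℕ) (a b : G), f (altProd a b n) = altProd (f a) (f b) n
  | 0, _, _ => by simp [altProd]
  | n + 1, a, b => by simp [altProd, altProd_map f n b a]

lemma altProd_two_mul {G : Type*} [Monoid G] (a b : G) :
    ∀ n : ℕ, altProd a b (2 * n) = (a * b) ^ n
  | 0 => by simp [altProd]
  | n + 1 => by
      have h : 2 * (n + 1) = (2 * n) + 1 + 1 := by ring
      rw [h]
      show a * (b * altProd a b (2 * n)) = (a * b) ^ (n + 1)
      rw [altProd_two_mul a b n, pow_succ']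
      group

lemma altProd_succ_right {G : Type*} [Monoid G] :
    ∀ (n : ℕ) (a b : G),
      altProd a b (n + 1) = altProd a b n * (if Even n then a else b)
  | 0, a, b => by simp [altProd]
  | n + 1, a, b => by
      show a * altProd b a (n + 1) = a * altProd b a n * _
      rw [altProd_succ_right n b a, mul_assoc]
      by_cases h : Even n <;> simp [h, Nat.even_add_one]

/-- The defining relation holds in the presented group. -/
lemma dihedral_rel (m : ℕ) :
    altProd (PresentedGroup.of false : PresentedGroup (dihedralRels m))
        (PresentedGroup.of true) m =
      altProd (PresentedGroup.of true) (PresentedGroup.of false) m := by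
  have h : PresentedGroup.mk (dihedralRels m)
      (altProd (FreeGroup.of false) (FreeGroup.of true) m *
        (altProd (FreeGroup.of true) (FreeGroup.of false) m)⁻¹) = 1 :=
    (QuotientGroup.eq_one_iff _).2 (Subgroup.subset_normalClosure rfl)
  rw [map_mul, map_inv, altProd_map, altProd_map] at h
  exact mul_inv_eq_one.mp h

/-- in a dihedral Artin group `B` with odd parameter `m_B ≥ 3`,
for `4 ∣ m_A`, `β ∈ B` and `t ∈ ℤ`, the elements `b₁` and `b₁⁻¹ β Δ_B^t β⁻¹`
satisfy the Artin relation of length `m_A`, hence `a₁ ↦ b₁`,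
`a₂ ↦ b₁⁻¹ β Δ_B^t β⁻¹` defines a homomorphism from the dihedral Artin group
with parameter `m_A` to `B`. -/
theorem stmt10 (mB : ℕ) (hoddB : Odd mB) (hmB : 3 ≤ mB)
    (mA : ℕ) (h4 : 4 ∣ mA)
    (β : PresentedGroup (dihedralRels mB)) (t : ℤ)
    (b₁ ΔB c : PresentedGroup (dihedralRels mB))
    (hb₁ : b₁ = PresentedGroup.of false)
    (hΔ : ΔB = altProd (PresentedGroup.of false) (PresentedGroup.of true) mB)
    (hc : c = b₁⁻¹ * β * ΔB ^ t * β⁻¹) :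
    altProd b₁ c mA = altProd c b₁ mA ∧
    ∃ φ : PresentedGroup (dihedralRels mA) →* PresentedGroup (dihedralRels mB),
      φ (PresentedGroup.of false) = b₁ ∧ φ (PresentedGroup.of true) = c := by
  let B := PresentedGroup (dihedralRels mB)
  set b₂ : B := PresentedGroup.of true with hb₂
  have hne : ¬ Even mB := Nat.not_even_iff_odd.mpr hoddB
  have hrel : altProd (PresentedGroup.of false : B) (PresentedGroup.of true) mB
      = altProd (PresentedGroup.of true) (PresentedGroup.of false) mB :=
    dihedral_rel mB
  -- Δ b₂ = b₁ Δ and Δ b₁ = b₂ Δ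
  have h1 : ΔB * b₂ = b₁ * ΔB := by
    have e1 : altProd (PresentedGroup.of false : B) (PresentedGroup.of true) (mB + 1)
        = ΔB * b₂ := by
      rw [altProd_succ_right, if_neg hne, ← hΔ]
    have e2 : altProd (PresentedGroup.of false : B) (PresentedGroup.of true) (mB + 1)
        = b₁ * ΔB := by
      show (PresentedGroup.of false : B) *
        altProd (PresentedGroup.of true) (PresentedGroup.of false) mB = _
      rw [← hrel, ← hΔ, ← hb₁]
    rw [← e1, e2]
  have h2 : ΔB * b₁ = b₂ * ΔB := by
    have e1 : altProd (PresentedGroup.of true : B) (PresentedGroup.of false) (mB + 1)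
        = ΔB * b₁ := by
      rw [altProd_succ_right, if_neg hne, ← hrel, ← hΔ, ← hb₁]
    have e2 : altProd (PresentedGroup.of true : B) (PresentedGroup.of false) (mB + 1)
        = b₂ * ΔB := by
      show (PresentedGroup.of true : B) *
        altProd (PresentedGroup.of false) (PresentedGroup.of true) mB = _
      rw [← hΔ, ← hb₂]
    rw [← e1, e2]
  -- ΔB² is central
  have hcent : ∀ g : B, Commute (ΔB ^ 2) g := by
    intro g
    have hmem : g ∈ Subgroup.centralizer ({ΔB ^ 2} : Set B) := by
      have hle : (Subgroup.closure (Set.range (PresentedGroup.of : Bool → B))) ≤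
          Subgroup.centralizer ({ΔB ^ 2} : Set B) := by
        rw [Subgroup.closure_le]
        rintro x ⟨i, rfl⟩
        rw [SetLike.mem_coe, Subgroup.mem_centralizer_iff]
        rintro y rfl
        cases i
        · rw [← hb₁]
          show ΔB ^ 2 * b₁ = b₁ * ΔB ^ 2
          calc ΔB ^ 2 * b₁ = ΔB * (ΔB * b₁) := by rw [pow_two, mul_assoc]
            _ = ΔB * b₂ * ΔB := by rw [h2, mul_assoc]
            _ = b₁ * ΔB ^ 2 := by rw [h1, pow_two, mul_assoc]
        · show ΔB ^ 2 * b₂ = b₂ * ΔB ^ 2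
          calc ΔB ^ 2 * b₂ = ΔB * (ΔB * b₂) := by rw [pow_two, mul_assoc]
            _ = ΔB * b₁ * ΔB := by rw [h1, mul_assoc]
            _ = b₂ * ΔB ^ 2 := by rw [h2, pow_two, mul_assoc]
      exact hle ((PresentedGroup.closure_range_of (dihedralRels mB)).symm ▸ Subgroup.mem_top g)
    exact (Subgroup.mem_centralizer_iff.mp hmem) (ΔB ^ 2) rfl
  have hcentz : ∀ (m : ℤ) (g : B), (ΔB ^ 2) ^ m * g = g * (ΔB ^ 2) ^ m :=
    fun m g => ((hcent g).zpow_left m).eq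
  -- main computation
  obtain ⟨k, hk⟩ := h4
  have hb₁c : b₁ * c = β * ΔB ^ t * β⁻¹ := by rw [hc]; group
  have hexp : ∀ n : ℕ, (ΔB ^ t) ^ (2 * n) = (ΔB ^ 2) ^ (t * n) := by
    intro n
    have e1 : (ΔB ^ t) ^ (2 * n) = ΔB ^ (t * ((2 * n : ℕ) : ℤ)) := by
      rw [← zpow_natCast (ΔB ^ t) (2 * n), ← zpow_mul]
    have e2 : (ΔB ^ 2) ^ (t * (n : ℤ)) = ΔB ^ (((2 : ℕ) : ℤ) * (t * n)) := by
      rw [← zpow_natCast ΔB 2, ← zpow_mul]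
    rw [e1, e2]
    congr 1
    push_cast
    ring
  have key : ∀ n : ℕ, (b₁ * c) ^ (2 * n) = (ΔB ^ 2) ^ (t * (n : ℤ)) := by
    intro n
    rw [hb₁c, conj_pow, hexp, mul_assoc, hcentz, ← mul_assoc,
      mul_inv_cancel, one_mul]
  have key2 : ∀ n : ℕ, (c * b₁) ^ (2 * n) = (ΔB ^ 2) ^ (t * (n : ℤ)) := by
    intro n
    have e : c * b₁ = b₁⁻¹ * (b₁ * c) * b₁ := by group
    rw [e]
    have e2 : (b₁⁻¹ * (b₁ * c) * b₁) ^ (2 * n) = b₁⁻¹ * (b₁ * c) ^ (2 * n) * b₁ := by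
      have := conj_pow (i := 2 * n) (a := b₁⁻¹) (b := b₁ * c)
      simpa using this
    rw [e2, key n, mul_assoc, hcentz, ← mul_assoc, inv_mul_cancel, one_mul]
  have hmain : altProd b₁ c mA = altProd c b₁ mA := by
    have hmA : mA = 2 * (2 * k) := by omega
    rw [hmA, altProd_two_mul, altProd_two_mul, key, key2]
  refine ⟨hmain, ?_⟩
  -- the homomorphism
  set f : Bool → B := fun x => if x then c else b₁ with hf
  have hrels : ∀ r ∈ dihedralRels mA, FreeGroup.lift f r = 1 := by
    rintro r rfl
    rw [map_mul, map_inv, altProd_map, altProd_map]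
    simp only [FreeGroup.lift_apply_of, hf, if_pos, if_neg, Bool.false_eq_true,
      ite_true, ite_false]
    rw [hmain, mul_inv_cancel]
  refine ⟨PresentedGroup.toGroup hrels, ?_, ?_⟩
  · rw [PresentedGroup.toGroup.of]; simp [hf]
  · rw [PresentedGroup.toGroup.of]; simp [hf]
end

section
/- Let M be a retract-compatible Coxeter matrix over a finite set S with |S| ≥ 2, let x ∈ S, and let y ∈ S \ {x} be such that m_{x,y} divides m_{x,y'} for all y' ∈ S \ {x}. Then for every z ∈ S \ {x,y}, the value m_{y,z} divides m_{x,z}. -/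
/-- in a retract-compatible Coxeter matrix over `S` with
`|S| ≥ 2`, if `m_{x,y}` divides `m_{x,y'}` for all `y' ≠ x`, then for every
`z ∉ {x,y}` the value `m_{y,z}` divides `m_{x,z}`. -/
theorem stmt14 {S : Type*} [Fintype S] (M : S → S → ℕ)
    (hcard : 2 ≤ Fintype.card S)
    (hsymm : ∀ s t, M s t = M t s) (hdiag : ∀ s, M s s = 1)
    (hodd : ∀ s t, s ≠ t → Odd (M s t)) (hge : ∀ s t, s ≠ t → 2 ≤ M s t)
    (hrc : ∀ a b c : S, a ≠ b → a ≠ c → b ≠ c →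
      (M a b = M a c ∧ M b c ∣ M a b) ∨
      (M b a = M b c ∧ M a c ∣ M b a) ∨
      (M c a = M c b ∧ M a b ∣ M c a))
    (x y : S) (hyx : y ≠ x)
    (hmin : ∀ y' : S, y' ≠ x → M x y ∣ M x y') :
    ∀ z : S, z ≠ x → z ≠ y → M y z ∣ M x z := by
  intro z hzx hzy
  rcases hrc x y z hyx.symm (Ne.symm hzx) (Ne.symm hzy) with ⟨h1, h2⟩ | ⟨h1, h2⟩ | ⟨h1, h2⟩
  · rwa [h1] at h2
  · have hxz : M x z ∣ M x y := by rwa [hsymm y x] at h2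
    have hxy : M x y ∣ M x z := hmin z hzx
    have h3 : M x z = M x y := Nat.dvd_antisymm hxz hxy
    rw [h3, ← hsymm y x, h1]
  · rw [hsymm z x, hsymm z y] at h1
    rw [← h1]
end

section
/- Let M be a retract-compatible Coxeter matrix over a finite set S with |S| ≥ 2 and let A_S be the associated Artin group. Then for every x ∈ S there exists a retraction ψ : A_S → A_{S\{x}} with ψ(z) = z for z ≠ x and ψ(x) = y for some y ∈ S \ {x}. -/
/-- The Artin relations associated to a Coxeter matrix with finite entries. -/
def artinRels {S : Type*} (M : S → S → ℕ) : Set (FreeGroup S) :=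
  { r | ∃ s t : S, s ≠ t ∧
      r = altProd (FreeGroup.of s) (FreeGroup.of t) (M s t) *
          (altProd (FreeGroup.of t) (FreeGroup.of s) (M s t))⁻¹ }

section lemmas
variable {G : Type*} [Monoid G]

lemma altProd_self (a : G) : ∀ n, altProd a a n = a ^ n
  | 0 => by simp [altProd]
  | n + 1 => by rw [altProd, altProd_self a n, pow_succ']

lemma map_altProd {H : Type*} [Monoid H] (φ : G →* H) :
    ∀ (a b : G) (n : ℕ), φ (altProd a b n) = altProd (φ a) (φ b) n
  | _, _, 0 => by simp [altProd]
  | a, b, n + 1 => by rw [altProd, map_mul, map_altProd φ b a n]; rfl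

lemma altProd_odd (a b : G) : ∀ k, altProd a b (2 * k + 1) = (a * b) ^ k * a
  | 0 => by simp [altProd]
  | k + 1 => by
    have h : 2 * (k + 1) + 1 = (2 * k + 1) + 1 + 1 := by ring
    rw [h, altProd, altProd, altProd_odd a b k]
    simp [pow_succ', mul_assoc]

lemma shift (a b : G) : ∀ n : ℕ, a * (b * a) ^ n = (a * b) ^ n * a
  | 0 => by simp
  | n + 1 => by rw [pow_succ, ← mul_assoc, shift a b n, pow_succ]; simp [mul_assoc]

end lemmas

section grp
variable {G : Type*} [Group G]

lemma half (a b : G) (k q : ℕ) (h : (a * b) ^ k * a = (b * a) ^ k * b) :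
    ((a * b) ^ k * a) ^ (2 * q + 1) = (a * b) ^ ((2 * k + 1) * q + k) * a := by
  have hsq : ((a * b) ^ k * a) ^ 2 = (a * b) ^ (2 * k + 1) := by
    rw [sq]
    nth_rewrite 2 [h]
    calc (a * b) ^ k * a * ((b * a) ^ k * b)
        = (a * b) ^ k * (a * (b * a) ^ k) * b := by
          simp [mul_assoc]
      _ = (a * b) ^ k * ((a * b) ^ k * a) * b := by rw [shift]
      _ = (a * b) ^ (2 * k + 1) := by
          rw [two_mul, pow_succ, pow_add]; simp [mul_assoc]
  rw [pow_succ, pow_mul, hsq, ← pow_mul, ← mul_assoc, ← pow_add]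

lemma propagate (a b : G) (k q : ℕ)
    (h : altProd a b (2 * k + 1) = altProd b a (2 * k + 1)) :
    altProd a b ((2 * k + 1) * (2 * q + 1)) = altProd b a ((2 * k + 1) * (2 * q + 1)) := by
  rw [altProd_odd, altProd_odd] at h
  have harith : (2 * k + 1) * (2 * q + 1) = 2 * ((2 * k + 1) * q + k) + 1 := by ring
  rw [harith, altProd_odd, altProd_odd, ← half a b k q h, ← half b a k q h.symm, h]

lemma braid_dvd (a b : G) (m m' : ℕ) (hm : Odd m) (hm' : Odd m') (hd : m ∣ m')
    (h : altProd a b m = altProd b a m) : altProd a b m' = altProd b a m' := by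
  obtain ⟨c, hc⟩ := hd
  have hcodd : Odd c := (Nat.odd_mul.mp (hc ▸ hm')).2
  obtain ⟨k, hk⟩ := hm
  obtain ⟨q, hq⟩ := hcodd
  subst hc hk hq
  exact propagate a b k q h

end grp

/-- if `M` is retract-compatible with `|S| ≥ 2`, then for every
`x ∈ S` there is an ordinary retraction `ψ : A_S → A_{S∖{x}}` with `ψ(z) = z`
for `z ≠ x` and `ψ(x) = y` for some `y ≠ x`. -/
theorem stmt15 {S : Type*} [Fintype S] (M : S → S → ℕ)
    (hcard : 2 ≤ Fintype.card S)
    (hsymm : ∀ s t, M s t = M t s) (hdiag : ∀ s, M s s = 1)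
    (hodd : ∀ s t, s ≠ t → Odd (M s t)) (hge : ∀ s t, s ≠ t → 2 ≤ M s t)
    (hrc : ∀ a b c : S, a ≠ b → a ≠ c → b ≠ c →
      (M a b = M a c ∧ M b c ∣ M a b) ∨
      (M b a = M b c ∧ M a c ∣ M b a) ∨
      (M c a = M c b ∧ M a b ∣ M c a))
    (x : S) :
    ∃ (y : S) (hy : y ≠ x),
      ∃ ψ : PresentedGroup (artinRels M) →*
          PresentedGroup (artinRels (fun a b : {z : S // z ≠ x} => M a b)),
        (∀ (z : S) (hz : z ≠ x),
          ψ (PresentedGroup.of z) = PresentedGroup.of (⟨z, hz⟩ : {z : S // z ≠ x})) ∧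
        ψ (PresentedGroup.of x) = PresentedGroup.of (⟨y, hy⟩ : {z : S // z ≠ x}) := by
  classical
  set T := {z : S // z ≠ x} with hT
  set M' : T → T → ℕ := fun a b : T => M a b with hM'
  -- choose y minimizing M x ·
  obtain ⟨z0, hz0⟩ := Fintype.exists_ne_of_one_lt_card (by omega) x
  have : Nonempty T := ⟨⟨z0, hz0⟩⟩
  obtain ⟨y, hymin⟩ := Finite.exists_min (fun t : T => M x t)
  have hxy : x ≠ y.1 := Ne.symm y.2
  -- M x y divides M x z for all z ≠ x
  have hdvd1 : ∀ z : S, z ≠ x → M x y.1 ∣ M x z := by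
    intro z hz
    by_cases hzy : z = y.1
    · subst hzy; exact dvd_refl _
    rcases hrc x y.1 z hxy (Ne.symm hz) (fun h => hzy h.symm) with
      ⟨h1, _⟩ | ⟨h1, h2⟩ | ⟨h1, h2⟩
    · exact h1 ▸ dvd_refl _
    · rw [hsymm y.1 x] at h2
      have hle : M x y.1 ≤ M x z := hymin ⟨z, hz⟩
      have hle2 : M x z ≤ M x y.1 :=
        Nat.le_of_dvd (by have := hge x y.1 hxy; omega) h2
      have : M x y.1 = M x z := le_antisymm hle hle2
      exact this ▸ dvd_refl _
    · rw [hsymm z x] at h2; exact h2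
  -- M y z divides M x z for all z ≠ x, z ≠ y
  have hdvd2 : ∀ z : S, z ≠ x → z ≠ y.1 → M y.1 z ∣ M x z := by
    intro z hz hzy
    rcases hrc x y.1 z hxy (Ne.symm hz) (fun h => hzy h.symm) with
      ⟨h1, h2⟩ | ⟨h1, h2⟩ | ⟨h1, _⟩
    · exact h1 ▸ h2
    · rw [← h1, hsymm y.1 x]; exact hdvd1 z hz
    · have : M y.1 z = M x z := by rw [hsymm y.1 z, ← h1, hsymm z x]
      exact this ▸ dvd_refl _
  -- the target group and the map on generators
  set A' := PresentedGroup (artinRels M') with hA'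
  set f : S → A' := fun s => if h : s = x then PresentedGroup.of y
    else PresentedGroup.of ⟨s, h⟩ with hf
  -- braid relations hold in A'
  have hbase : ∀ s t : T,
      altProd (PresentedGroup.of s : A') (PresentedGroup.of t) (M s.1 t.1) =
      altProd (PresentedGroup.of t) (PresentedGroup.of s) (M s.1 t.1) := by
    intro s t
    by_cases hst : s = t
    · subst hst; rw [altProd_self]
    · have hr : (altProd (FreeGroup.of s) (FreeGroup.of t) (M' s t) *
          (altProd (FreeGroup.of t) (FreeGroup.of s) (M' s t))⁻¹) ∈ artinRels M' :=
        ⟨s, t, hst, rfl⟩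
      have h1 : PresentedGroup.mk (artinRels M')
          (altProd (FreeGroup.of s) (FreeGroup.of t) (M' s t) *
            (altProd (FreeGroup.of t) (FreeGroup.of s) (M' s t))⁻¹) = 1 :=
        (QuotientGroup.eq_one_iff _).mpr (Subgroup.subset_normalClosure hr)
      rw [map_mul, map_inv, map_altProd, map_altProd, mul_inv_eq_one] at h1
      exact h1
  -- the generic braid relation for the images
  have hkey : ∀ s t : S, s ≠ t →
      altProd (f s) (f t) (M s t) = altProd (f t) (f s) (M s t) := by
    intro s t hst
    by_cases hs : s = x
    · rw [hs] at hst ⊢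
      have ht : t ≠ x := Ne.symm hst
      have hfx : f x = PresentedGroup.of y := by simp [hf]
      by_cases hty : t = y.1
      · have hft : f t = PresentedGroup.of y := by
          simp only [hf, dif_neg ht]
          exact congrArg PresentedGroup.of (Subtype.ext hty)
        rw [hfx, hft, altProd_self]
      · have hft : f t = PresentedGroup.of (⟨t, ht⟩ : T) := by
          simp only [hf, dif_neg ht]
        rw [hfx, hft]
        exact braid_dvd _ _ (M y.1 t) (M x t)
          (hodd y.1 t (fun h => hty h.symm)) (hodd x t (Ne.symm ht))
          (hdvd2 t ht hty) (hbase y ⟨t, ht⟩)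
    · by_cases ht : t = x
      · rw [ht] at hst ⊢
        have hfx : f x = PresentedGroup.of y := by simp [hf]
        have hfs : f s = PresentedGroup.of (⟨s, hs⟩ : T) := by
          simp only [hf, dif_neg hs]
        by_cases hsy : s = y.1
        · have : f s = PresentedGroup.of y := by
            rw [hfs]; exact congrArg PresentedGroup.of (Subtype.ext hsy)
          rw [this, hfx, altProd_self]
        · rw [hfs, hfx]
          exact braid_dvd _ _ (M s y.1) (M s x)
            (hodd s y.1 hsy) (hodd s x hs)
            (by rw [hsymm s y.1, hsymm s x]; exact hdvd2 s hs hsy)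
            (hbase ⟨s, hs⟩ y)
      · have hfs : f s = PresentedGroup.of (⟨s, hs⟩ : T) := by
          simp only [hf, dif_neg hs]
        have hft : f t = PresentedGroup.of (⟨t, ht⟩ : T) := by
          simp only [hf, dif_neg ht]
        rw [hfs, hft]
        exact hbase ⟨s, hs⟩ ⟨t, ht⟩
  -- the relations are satisfied
  have hrels : ∀ r ∈ artinRels M, FreeGroup.lift f r = 1 := by
    rintro r ⟨s, t, hst, rfl⟩
    rw [map_mul, map_inv, map_altProd, map_altProd, FreeGroup.lift_apply_of,
      FreeGroup.lift_apply_of, mul_inv_eq_one]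
    exact hkey s t hst
  refine ⟨y.1, y.2, PresentedGroup.toGroup hrels, ?_, ?_⟩
  · intro z hz
    rw [PresentedGroup.toGroup.of]
    simp [hf, hz]
  · rw [PresentedGroup.toGroup.of]
    simp [hf]
end
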